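/- In the circle theorem's setup (C_n^0 with n ≥ 10, commuting retractions φ_i all assumed K-Lipschitz with K = (√(8n+1) − 1)/8, μ_1 = φ_1-image of all of C_n): define A (resp. B) as the set of points y ∈ C_n \ {μ_1} with d(y, μ_1) ≤ 3K lying to the left (resp. right) of μ_1, and for w ∈ C_n \ {μ_1} let f(w) ∈ {A, B} record which of A, B contains the last point of the chain S_w from μ_1 to w that lies in A ∪ B. Then f is well-defined: every chain S_w from μ_1 to w intersects A ∪ B, because the second element z of S_w satisfies d(μ_1, z) ≤ 2K. -/

import Mathlib

/-- Chain relation for indices in `Fin (n+1)`: `a < b` and `φ (b-1) (μ b) = μ a`. -/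
def chainRelF {M : Type*} {n : ℕ} (φ : Fin (n + 1) → M → M) (μ : Fin (n + 1) → M)
    (a b : Fin (n + 1)) : Prop :=
  a < b ∧ φ (b - 1) (μ b) = μ a

/-!
Write `μ j = x k` and `μ 1 = x l` with `k, l ≠ 0` and walk from `k` to `l` along the circle in
unit steps. The retraction `φ j` fixes `μ j` at the start but not `μ 1` at the end, so it changes
value across some unit step `p → q`. As `φ (j - 1) = φ (j - 1) ∘ φ j`, the map `φ (j - 1)` sends `p`
to `φ (j - 1) (μ j) = μ 1` and fixes `φ j q`, which lies in `μ '' {i | i < j}`. Applying the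
`K`-Lipschitz bound to `φ j` and to `φ (j - 1)` across that step and the triangle inequality
through `φ j q` give `d(μ j, μ 1) ≤ 2K`.
-/

open Relation Set

theorem Relation.ReflTransGen.exists_rel_of_pred_of_not_pred {α : Type*} {r : α → α → Prop}
    {P : α → Prop} {a b : α} (h : ReflTransGen r a b) (ha : P a) (hb : ¬P b) :
    ∃ u v, r u v ∧ P u ∧ ¬P v := by
  induction h with
  | refl => exact absurd ha hb
  | @tail c d _ hcd ih =>
    by_cases hc : P c
    · exact ⟨c, d, hcd, hc, hb⟩
    · exact ih hc

theorem List.IsChain.rel_of_head?_of_getElem?_one {α : Type*} {R : α → α → Prop} {S : List α}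
    {a b : α} (hS : S.IsChain R) (ha : S.head? = some a) (hb : S[1]? = some b) : R a b := by
  match S, hS with
  | a' :: b' :: _, hS =>
    obtain rfl : a' = a := by simpa using ha
    obtain rfl : b' = b := by simpa using hb
    exact (List.isChain_cons_cons.mp hS).1

section Circle

variable {M : Type*} [MetricSpace M] {n : ℕ} {x : Fin (n + 1) → M}

theorem reflTransGen_dist_le_one
    (hd : ∀ k l : Fin (n + 1), k ≠ 0 → l ≠ 0 →
      dist (x k) (x l) = min ((((k : ℕ) : ℤ) - ((l : ℕ) : ℤ)).natAbs : ℝ)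
        ((n : ℝ) - ((((k : ℕ) : ℤ) - ((l : ℕ) : ℤ)).natAbs : ℝ)))
    {k l : Fin (n + 1)} (hk : k ≠ 0) (hl : l ≠ 0) :
    ReflTransGen (fun a b ↦ dist (x a) (x b) ≤ 1) k l := by
  have : Std.Symm (fun a b ↦ dist (x a) (x b) ≤ 1) := ⟨fun a b h ↦ by rwa [dist_comm]⟩
  wlog hkl : k ≤ l generalizing k l
  · exact Std.Symm.symm _ _ (this hl hk (le_of_not_ge hkl))
  -- the walk `k, k + 1, …, l` through the indices, made total on `ℕ` by stalling at `n`
  let walk : ℕ → Fin (n + 1) := fun i ↦ ⟨min i n, by omega⟩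
  have hstep : ∀ i, 1 ≤ i →
      ReflTransGen (fun a b ↦ dist (x a) (x b) ≤ 1) (walk i) (walk (i + 1)) := by
    intro i hi
    by_cases hin : i < n
    · refine .single ?_
      rw [hd _ _ (by simp [walk, Fin.ext_iff]; omega) (by simp [walk, Fin.ext_iff]; omega)]
      refine (min_le_left _ _).trans ?_
      have hdiff : ((walk i : ℕ) : ℤ) - (walk (i + 1) : ℕ) = -1 := by simp only [walk]; omega
      rw [hdiff]
      norm_num
    · have : walk i = walk (i + 1) := by simp [walk]; omega
      rw [this]
  have hwalk : ∀ m : Fin (n + 1), walk m = m := fun m ↦ Fin.ext (min_eq_left m.is_le)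
  simpa only [hwalk] using Nat.rel_of_forall_rel_succ_of_le_of_le _ hstep
    (Nat.one_le_iff_ne_zero.mpr (Fin.val_ne_zero_iff.mpr hk)) (Fin.le_def.mp hkl)

end Circle

section Retractions

variable {M : Type*} [MetricSpace M] {n : ℕ} {μ : Fin (n + 1) → M} {φ : Fin (n + 1) → M → M}
  {K : ℝ}

theorem dist_le_two_mul_of_chainRelF_of_jump {X : Set M}
    (hmaps : ∀ i, ∀ p ∈ X, ∃ j ≤ i, φ i p = μ j)
    (hretr : ∀ i, ∀ j ≤ i, φ i (μ j) = μ j)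
    (hcomm : ∀ i j, i ≤ j → ∀ p ∈ X, φ i (φ j p) = φ i p)
    (hlip : ∀ i, ∀ p ∈ X, ∀ q ∈ X, dist (φ i p) (φ i q) ≤ K * dist p q) (hK : 0 ≤ K)
    {a b : Fin (n + 1)} (hab : chainRelF φ μ a b) {p q : M} (hp : p ∈ X) (hq : q ∈ X)
    (hpq : dist p q ≤ 1) (hpb : φ b p = μ b) (hqb : φ b q ≠ μ b) :
    dist (μ b) (μ a) ≤ 2 * K := by
  obtain ⟨hlt, hchain⟩ := hab
  have hb : (b - 1 : Fin (n + 1)).val = b.val - 1 :=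
    Fin.val_sub_one_of_ne_zero (Fin.pos_iff_ne_zero.mp ((Fin.zero_le a).trans_lt hlt))
  obtain ⟨c, hcb, hqc⟩ := hmaps b q hq
  have hcb' : c ≠ b := by rintro rfl; exact hqb hqc
  have hc : c ≤ b - 1 := by rw [Fin.le_def, hb]; have := Fin.val_ne_of_ne hcb'; omega
  have hpred : b - 1 ≤ b := by rw [Fin.le_def, hb]; omega
  have hp' : φ (b - 1) p = μ a := by rw [← hcomm _ _ hpred p hp, hpb, hchain]
  have hq' : φ (b - 1) q = φ b q := by rw [← hcomm _ _ hpred q hq, hqc, hretr _ _ hc]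
  calc dist (μ b) (μ a) ≤ dist (φ b p) (φ b q) + dist (φ (b - 1) q) (φ (b - 1) p) := by
        rw [hpb, hp', hq']; exact dist_triangle _ _ _
    _ ≤ K * dist p q + K * dist q p := add_le_add (hlip _ p hp q hq) (hlip _ q hq p hp)
    _ ≤ K + K := by rw [dist_comm q p]; gcongr <;> exact mul_le_of_le_one_right hK hpq
    _ = 2 * K := by ring

theorem dist_le_two_mul_of_chainRelF {x : Fin (n + 1) → M}
    (hd : ∀ k l : Fin (n + 1), k ≠ 0 → l ≠ 0 →
      dist (x k) (x l) = min ((((k : ℕ) : ℤ) - ((l : ℕ) : ℤ)).natAbs : ℝ)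
        ((n : ℝ) - ((((k : ℕ) : ℤ) - ((l : ℕ) : ℤ)).natAbs : ℝ)))
    (hμ0 : μ 0 = x 0) (hμinj : Function.Injective μ) (hμrange : range μ = range x)
    (hmaps : ∀ i, ∀ p ∈ range x, ∃ j ≤ i, φ i p = μ j)
    (hretr : ∀ i, ∀ j ≤ i, φ i (μ j) = μ j)
    (hcomm : ∀ i j, i ≤ j → ∀ p ∈ range x, φ i (φ j p) = φ i p)
    (hlip : ∀ i, ∀ p ∈ range x, ∀ q ∈ range x, dist (φ i p) (φ i q) ≤ K * dist p q)
    (hK : 0 ≤ K) {a b : Fin (n + 1)} (hab : chainRelF φ μ a b) (ha : a ≠ 0) :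
    dist (μ b) (μ a) ≤ 2 * K := by
  have hb : b ≠ 0 := (Fin.pos_iff_ne_zero.mp ((Fin.zero_le a).trans_lt hab.1))
  obtain ⟨k, hk⟩ : μ b ∈ range x := hμrange ▸ mem_range_self b
  obtain ⟨l, hl⟩ : μ a ∈ range x := hμrange ▸ mem_range_self a
  have hk0 : k ≠ 0 := by rintro rfl; exact hb (hμinj (hk.symm.trans hμ0.symm))
  have hl0 : l ≠ 0 := by rintro rfl; exact ha (hμinj (hl.symm.trans hμ0.symm))
  obtain ⟨u, v, huv, hu, hv⟩ :=
    (reflTransGen_dist_le_one hd hk0 hl0).exists_rel_of_pred_of_not_pred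
      (P := fun i ↦ φ b (x i) = μ b) (by rw [hk, hretr b b le_rfl])
      (by rw [hl, hretr b a hab.1.le]; exact fun h ↦ hab.1.ne (hμinj h))
  exact dist_le_two_mul_of_chainRelF_of_jump hmaps hretr hcomm hlip hK hab
    (mem_range_self u) (mem_range_self v) huv hu hv

end Retractions

theorem chain_second_element_close_general {M : Type*} [MetricSpace M]
    (n : ℕ) (x : Fin (n + 1) → M)
    (hd : ∀ k l : Fin (n + 1), k ≠ 0 → l ≠ 0 →
      dist (x k) (x l) = min ((((k : ℕ) : ℤ) - ((l : ℕ) : ℤ)).natAbs : ℝ)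
        ((n : ℝ) - ((((k : ℕ) : ℤ) - ((l : ℕ) : ℤ)).natAbs : ℝ)))
    (μ : Fin (n + 1) → M) (hμ0 : μ 0 = x 0) (hμinj : Function.Injective μ)
    (hμrange : Set.range μ = Set.range x)
    (φ : Fin (n + 1) → M → M)
    (hmaps : ∀ i : Fin (n + 1), ∀ p ∈ Set.range x, ∃ j ≤ i, φ i p = μ j)
    (hretr : ∀ i : Fin (n + 1), ∀ j ≤ i, φ i (μ j) = μ j)
    (hcomm : ∀ i j : Fin (n + 1), i ≤ j → ∀ p ∈ Set.range x,
      φ j (φ i p) = φ i p ∧ φ i (φ j p) = φ i p)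
    (hlip : ∀ i : Fin (n + 1), ∀ a ∈ Set.range x, ∀ b ∈ Set.range x,
      dist (φ i a) (φ i b) ≤ (Real.sqrt (8 * n + 1) - 1) / 8 * dist a b) :
    ∀ S : List (Fin (n + 1)), S.Chain' (chainRelF φ μ) → S.head? = some 1 →
      ∀ j : Fin (n + 1), S[1]? = some j →
        dist (μ j) (μ 1) ≤ 2 * ((Real.sqrt (8 * n + 1) - 1) / 8) ∧
        μ j ≠ μ 1 ∧
        dist (μ j) (μ 1) ≤ 3 * ((Real.sqrt (8 * n + 1) - 1) / 8) := by
  intro S hS hhead j hj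
  have hK : 0 ≤ (Real.sqrt (8 * n + 1) - 1) / 8 := by
    have : 1 ≤ Real.sqrt (8 * n + 1) :=
      Real.one_le_sqrt.mpr (by linarith [n.cast_nonneg (α := ℝ)])
    linarith
  have h1j : chainRelF φ μ 1 j := hS.rel_of_head?_of_getElem?_one hhead hj
  have h10 : (1 : Fin (n + 1)) ≠ 0 := by
    intro h
    obtain rfl : n = 0 := by simpa using h
    exact (h ▸ h1j.1).ne' (Fin.fin_one_eq_zero j)
  have hclose := dist_le_two_mul_of_chainRelF hd hμ0 hμinj hμrange hmaps hretr
    (fun i j hij p hp ↦ (hcomm i j hij p hp).2) hlip hK h1j h10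
  exact ⟨hclose, fun h ↦ h1j.1.ne' (hμinj h), by linarith⟩

/-- in the circle theorem's setup (`C_n^0`, `n ≥ 10`, commuting retractions
all `K`-Lipschitz with `K = (√(8n+1) - 1)/8`, and `φ 1 ≡ μ 1` on `C_n`), the map `f`
into `{A, B}` is well defined: every chain starting at `μ 1` meets
`A ∪ B = {y ≠ μ 1 : d(y, μ 1) ≤ 3K}`, since already its second element `z` satisfies
`d(μ 1, z) ≤ 2K` (and `z ≠ μ 1`), hence `d(μ 1, z) ≤ 3K`. -/
theorem chain_second_element_close {M : Type*} [MetricSpace M]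
    (n : ℕ) (hn : 10 ≤ n) (x : Fin (n + 1) → M) (hxinj : Function.Injective x)
    (hd0 : ∀ k : Fin (n + 1), k ≠ 0 → dist (x k) (x 0) = (n : ℝ))
    (hd : ∀ k l : Fin (n + 1), k ≠ 0 → l ≠ 0 →
      dist (x k) (x l) = min ((((k : ℕ) : ℤ) - ((l : ℕ) : ℤ)).natAbs : ℝ)
        ((n : ℝ) - ((((k : ℕ) : ℤ) - ((l : ℕ) : ℤ)).natAbs : ℝ)))
    (μ : Fin (n + 1) → M) (hμ0 : μ 0 = x 0) (hμinj : Function.Injective μ)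
    (hμrange : Set.range μ = Set.range x)
    (φ : Fin (n + 1) → M → M)
    (hmaps : ∀ i : Fin (n + 1), ∀ p ∈ Set.range x, ∃ j ≤ i, φ i p = μ j)
    (hretr : ∀ i : Fin (n + 1), ∀ j ≤ i, φ i (μ j) = μ j)
    (hcomm : ∀ i j : Fin (n + 1), i ≤ j → ∀ p ∈ Set.range x,
      φ j (φ i p) = φ i p ∧ φ i (φ j p) = φ i p)
    (hlip : ∀ i : Fin (n + 1), ∀ a ∈ Set.range x, ∀ b ∈ Set.range x,
      dist (φ i a) (φ i b) ≤ (Real.sqrt (8 * n + 1) - 1) / 8 * dist a b)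
    (hφ1 : ∀ p ∈ Set.range x, p ≠ x 0 → φ 1 p = μ 1) :
    ∀ S : List (Fin (n + 1)), S.Chain' (chainRelF φ μ) → S.head? = some 1 →
      ∀ j : Fin (n + 1), S[1]? = some j →
        dist (μ j) (μ 1) ≤ 2 * ((Real.sqrt (8 * n + 1) - 1) / 8) ∧
        μ j ≠ μ 1 ∧
        dist (μ j) (μ 1) ≤ 3 * ((Real.sqrt (8 * n + 1) - 1) / 8) :=
  chain_second_element_close_general n x hd μ hμ0 hμinj hμrange φ hmaps hretr hcomm hlip
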